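/- arXiv:math/9802087 — 2 statements merged into one kernel-verified Lean document; each statement's English description precedes it below -/
import Mathlib

section
/- Let ρ and τ be nonzero real numbers. Suppose (Γ, d) is a first order differential calculus on X satisfying, for all k, l ∈ {1, …, N}: dz_k·z_l = q⁻¹ Σ_{a,b} (R⁻¹)^{ab}_{kl} z_a·dz_b − q⁻²(ρ/τ)(s̃ρ−1) z_k z_l·θ₊ − (ρ/τ)(s̃τ−q²) z_k z_l·θ₋; dz*_k·z*_l = q Σ_{a,b} R̄^{ab}_{kl} z*_a·dz*_b − (τ/ρ)(s̃ρ−1) z*_k z*_l·θ₊ − q²(τ/ρ)(s̃τ−q²) z*_k z*_l·θ₋; dz_k·z*_l = q Σ_{a,b} (R←⁻¹)^{ab}_{kl} z*_a·dz_b − q⁻²ρ q^{2k} δ_{kl} θ₊ − τ q^{2k} δ_{kl} θ₋ + (sρ−1) z_k z*_l·θ₊ + q²(sτ−1) z_k z*_l·θ₋; dz*_k·z_l = q⁻¹ Σ_{a,b} (R→)^{ab}_{kl} z_a·dz*_b − q^{2N−2}ρ δ_{kl} θ₊ − q^{2N}τ δ_{kl} θ₋ + (sρ−1) z*_k z_l·θ₊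 + q²(sτ−1) z*_k z_l·θ₋. Then the one-form θ₀ := θ₊ + q²(τ/ρ) θ₋ quasi-commutes with the generators of X: for every m ∈ {1, …, N} there exist complex numbers c_m and c′_m such that θ₀·z_m = c_m z_m·θ₀ and θ₀·z*_m = c′_m z*_m·θ₀. -/
noncomputable section

open scoped BigOperators

namespace QSphere

/-- Generator index set: `Sum.inl i` stands for `z_{i+1}`, `Sum.inr i` for `z*_{i+1}`. -/
abbrev GenIdx (N : ℕ) := Fin N ⊕ Fin N

/-- The free unital `ℂ`-algebra on the `2N` generators. -/
abbrev FA (N : ℕ) := FreeAlgebra ℂ (GenIdx N)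

/-- The generator `z_{i+1}` of the free algebra. -/
def zf {N : ℕ} (i : Fin N) : FA N := FreeAlgebra.ι ℂ (Sum.inl i)

/-- The generator `z*_{i+1}` of the free algebra. -/
def zsf {N : ℕ} (i : Fin N) : FA N := FreeAlgebra.ι ℂ (Sum.inr i)

/-- `q` viewed as a complex number. -/
def qc (q : ℝ) : ℂ := (q : ℂ)

/-- `Q = q - q⁻¹` as a complex number. -/
def Qc (q : ℝ) : ℂ := qc q - (qc q)⁻¹

/-- The (1-based) integer index of `i : Fin N`. -/
def exZ {N : ℕ} (i : Fin N) : ℤ := (i : ℕ) + 1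

/-- The defining relations of the quantum sphere `S_q^{2N-1}`:
the two-sided ideal generated by the listed elements is divided out. -/
inductive SphereRel (N : ℕ) (q : ℝ) : FA N → FA N → Prop
  | zz {i j : Fin N} (h : i < j) :
      SphereRel N q (zf i * zf j) (qc q • (zf j * zf i))
  | ss {i j : Fin N} (h : i < j) :
      SphereRel N q (zsf i * zsf j) ((qc q)⁻¹ • (zsf j * zsf i))
  | zs {i j : Fin N} (h : i ≠ j) :
      SphereRel N q (zf i * zsf j) (qc q • (zsf j * zf i))
  | qcomm (i : Fin N) :
      SphereRel N q
        (zf i * zsf i - zsf i * zf i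
          + ((qc q)⁻¹ * Qc q) • ∑ k ∈ Finset.univ.filter (fun k => i < k), zf k * zsf k)
        0
  | sphere : SphereRel N q (∑ i, zf i * zsf i) 1

/-- The quantum sphere `S_q^{2N-1}`. -/
abbrev X (N : ℕ) (q : ℝ) := RingQuot (SphereRel N q)

/-- The generator `z_{i+1}` of the quantum sphere. -/
def Z (N : ℕ) (q : ℝ) (i : Fin N) : X N q := RingQuot.mkAlgHom ℂ (SphereRel N q) (zf i)

/-- The generator `z*_{i+1}` of the quantum sphere. -/
def Zs (N : ℕ) (q : ℝ) (i : Fin N) : X N q := RingQuot.mkAlgHom ℂ (SphereRel N q) (zsf i)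

/-- The R-matrix coefficient `R^{ij}_{kl}`. -/
def Rm (q : ℝ) {N : ℕ} (i j k l : Fin N) : ℂ :=
  if i = l ∧ j = k ∧ i ≠ j then 1
  else if i = j ∧ j = k ∧ k = l then qc q
  else if i = k ∧ j = l ∧ i < j then Qc q
  else 0

/-- The inverse R-matrix coefficient `(R⁻¹)^{ij}_{kl}`. -/
def Rinv (q : ℝ) {N : ℕ} (i j k l : Fin N) : ℂ :=
  if i = l ∧ j = k ∧ i ≠ j then 1
  else if i = j ∧ j = k ∧ k = l then (qc q)⁻¹
  else if i = k ∧ j = l ∧ j < i then -(Qc q)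
  else 0

/-- `R̄^{ij}_{kl} = R^{lk}_{ji}`. -/
def Rbar (q : ℝ) {N : ℕ} (i j k l : Fin N) : ℂ := Rm q l k j i

/-- `(R̄⁻¹)^{ij}_{kl} = (R⁻¹)^{lk}_{ji}`. -/
def Rbarinv (q : ℝ) {N : ℕ} (i j k l : Fin N) : ℂ := Rinv q l k j i

/-- `(R→)^{ij}_{kl} = R^{ki}_{lj}`. -/
def Rright (q : ℝ) {N : ℕ} (i j k l : Fin N) : ℂ := Rm q k i l j

/-- `(R←⁻¹)^{ij}_{kl} = q^{2l-2i} (R⁻¹)^{jl}_{ik}`. -/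
def Rlinv (q : ℝ) {N : ℕ} (i j k l : Fin N) : ℂ :=
  qc q ^ (2 * exZ l - 2 * exZ i) * Rinv q j l i k

/-- `s = Σ_{i=0}^{N-1} q^{2i}`. -/
def sP (N : ℕ) (q : ℝ) : ℂ := ∑ i ∈ Finset.range N, qc q ^ (2 * i)

/-- `s̃ = Σ_{i=1}^{N-1} q^{2i}`. -/
def sT (N : ℕ) (q : ℝ) : ℂ := ∑ i ∈ Finset.Ico 1 N, qc q ^ (2 * i)

/-- Kronecker delta. -/
def kdelta {N : ℕ} (k l : Fin N) : ℂ := if k = l then 1 else 0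


/-- The data of a candidate first order differential calculus on the quantum
sphere: an `X`-bimodule `Γ` (axioms are stated separately in `IsFODC`)
together with a differential map `d`. -/
structure PreCalc (N : ℕ) (q : ℝ) where
  Γ : Type
  [instAdd : AddCommGroup Γ]
  [instMod : Module ℂ Γ]
  lact : X N q → Γ → Γ
  ract : Γ → X N q → Γ
  d : X N q → Γ

attribute [instance] PreCalc.instAdd PreCalc.instMod

namespace PreCalc

variable {N : ℕ} {q : ℝ}

/-- `(Γ, d)` is a first order differential calculus on `X = S_q^{2N-1}`:
`Γ` is an `X`-bimodule (left and right module structures commuting with each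
other and compatible with the `ℂ`-scalar multiplication), `d` is `ℂ`-linear
and satisfies the Leibniz rule. -/
def IsFODC (D : PreCalc N q) : Prop :=
  (∀ (x : X N q) (ω η : D.Γ), D.lact x (ω + η) = D.lact x ω + D.lact x η) ∧
  (∀ (x y : X N q) (ω : D.Γ), D.lact (x + y) ω = D.lact x ω + D.lact y ω) ∧
  (∀ (x y : X N q) (ω : D.Γ), D.lact (x * y) ω = D.lact x (D.lact y ω)) ∧
  (∀ ω : D.Γ, D.lact 1 ω = ω) ∧
  (∀ (c : ℂ) (x : X N q) (ω : D.Γ), D.lact (c • x) ω = c • D.lact x ω) ∧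
  (∀ (c : ℂ) (x : X N q) (ω : D.Γ), D.lact x (c • ω) = c • D.lact x ω) ∧
  (∀ (ω η : D.Γ) (x : X N q), D.ract (ω + η) x = D.ract ω x + D.ract η x) ∧
  (∀ (ω : D.Γ) (x y : X N q), D.ract ω (x + y) = D.ract ω x + D.ract ω y) ∧
  (∀ (ω : D.Γ) (x y : X N q), D.ract ω (x * y) = D.ract (D.ract ω x) y) ∧
  (∀ ω : D.Γ, D.ract ω 1 = ω) ∧
  (∀ (c : ℂ) (ω : D.Γ) (x : X N q), D.ract (c • ω) x = c • D.ract ω x) ∧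
  (∀ (c : ℂ) (ω : D.Γ) (x : X N q), D.ract ω (c • x) = c • D.ract ω x) ∧
  (∀ (x : X N q) (ω : D.Γ) (y : X N q), D.ract (D.lact x ω) y = D.lact x (D.ract ω y)) ∧
  (∀ x y : X N q, D.d (x + y) = D.d x + D.d y) ∧
  (∀ (c : ℂ) (x : X N q), D.d (c • x) = c • D.d x) ∧
  (∀ x y : X N q, D.d (x * y) = D.ract (D.d x) y + D.lact x (D.d y))

/-- `dz_i`. -/
def dz (D : PreCalc N q) (i : Fin N) : D.Γ := D.d (Z N q i)

/-- `dz*_i`. -/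
def dzs (D : PreCalc N q) (i : Fin N) : D.Γ := D.d (Zs N q i)

/-- The invariant one-form `θ₊ = Σ_i z_i·dz*_i`. -/
def thP (D : PreCalc N q) : D.Γ := ∑ i, D.lact (Z N q i) (D.dzs i)

/-- The invariant one-form `θ₋ = Σ_i q^{-2i} z*_i·dz_i`. -/
def thM (D : PreCalc N q) : D.Γ :=
  ∑ i, (qc q ^ (-(2 * exZ i))) • D.lact (Zs N q i) (D.dz i)

/-- `Σ_{a,b} (R⁻¹)^{ab}_{kl} z_a·dz_b`. -/
def SRinv (D : PreCalc N q) (k l : Fin N) : D.Γ :=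
  ∑ a, ∑ b, Rinv q a b k l • D.lact (Z N q a) (D.dz b)

/-- `Σ_{a,b} R̄^{ab}_{kl} z*_a·dz*_b`. -/
def SRbar (D : PreCalc N q) (k l : Fin N) : D.Γ :=
  ∑ a, ∑ b, Rbar q a b k l • D.lact (Zs N q a) (D.dzs b)

/-- `Σ_{a,b} (R←⁻¹)^{ab}_{kl} z*_a·dz_b`. -/
def SRlinv (D : PreCalc N q) (k l : Fin N) : D.Γ :=
  ∑ a, ∑ b, Rlinv q a b k l • D.lact (Zs N q a) (D.dz b)

/-- `Σ_{a,b} (R→)^{ab}_{kl} z_a·dz*_b`. -/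
def SRright (D : PreCalc N q) (k l : Fin N) : D.Γ :=
  ∑ a, ∑ b, Rright q a b k l • D.lact (Z N q a) (D.dzs b)

/-- `z_k·dz_l`. -/
def lzdz (D : PreCalc N q) (k l : Fin N) : D.Γ := D.lact (Z N q k) (D.dz l)
/-- `z*_k·dz*_l`. -/
def lzsdzs (D : PreCalc N q) (k l : Fin N) : D.Γ := D.lact (Zs N q k) (D.dzs l)
/-- `z_k·dz*_l`. -/
def lzdzs (D : PreCalc N q) (k l : Fin N) : D.Γ := D.lact (Z N q k) (D.dzs l)
/-- `z*_k·dz_l`. -/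
def lzsdz (D : PreCalc N q) (k l : Fin N) : D.Γ := D.lact (Zs N q k) (D.dz l)

/-- `z_k z_l·θ₊`. -/
def zzP (D : PreCalc N q) (k l : Fin N) : D.Γ := D.lact (Z N q k * Z N q l) D.thP
/-- `z_k z_l·θ₋`. -/
def zzM (D : PreCalc N q) (k l : Fin N) : D.Γ := D.lact (Z N q k * Z N q l) D.thM
/-- `z*_k z*_l·θ₊`. -/
def zszsP (D : PreCalc N q) (k l : Fin N) : D.Γ := D.lact (Zs N q k * Zs N q l) D.thP
/-- `z*_k z*_l·θ₋`. -/
def zszsM (D : PreCalc N q) (k l : Fin N) : D.Γ := D.lact (Zs N q k * Zs N q l) D.thM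
/-- `z_k z*_l·θ₊`. -/
def zzsP (D : PreCalc N q) (k l : Fin N) : D.Γ := D.lact (Z N q k * Zs N q l) D.thP
/-- `z_k z*_l·θ₋`. -/
def zzsM (D : PreCalc N q) (k l : Fin N) : D.Γ := D.lact (Z N q k * Zs N q l) D.thM
/-- `z*_k z_l·θ₊`. -/
def zszP (D : PreCalc N q) (k l : Fin N) : D.Γ := D.lact (Zs N q k * Z N q l) D.thP
/-- `z*_k z_l·θ₋`. -/
def zszM (D : PreCalc N q) (k l : Fin N) : D.Γ := D.lact (Zs N q k * Z N q l) D.thM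

/-- `dz_1,…,dz_N,dz*_1,…,dz*_N` form a free basis of `Γ` as a left `X`-module. -/
def FreeBasis (D : PreCalc N q) : Prop :=
  (∀ ω : D.Γ, ∃ a b : Fin N → X N q,
      ω = ∑ i, D.lact (a i) (D.dz i) + ∑ i, D.lact (b i) (D.dzs i)) ∧
  (∀ a b : Fin N → X N q,
      ∑ i, D.lact (a i) (D.dz i) + ∑ i, D.lact (b i) (D.dzs i) = 0 →
      ∀ i, a i = 0 ∧ b i = 0)

/-- The relation `θ₊ + λ θ₋ = 0` holds in `Γ`. -/
def RelHolds (D : PreCalc N q) (lam : ℂ) : Prop := D.thP + lam • D.thM = 0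

/-- `dz_1,…,dz*_N` generate `Γ` as a left `X`-module and all left-module
relations between them are exactly the ones generated by `θ₊ + λ θ₋ = 0`. -/
def GenRel (D : PreCalc N q) (lam : ℂ) : Prop :=
  (∀ ω : D.Γ, ∃ a b : Fin N → X N q,
      ω = ∑ i, D.lact (a i) (D.dz i) + ∑ i, D.lact (b i) (D.dzs i)) ∧
  (∀ a b : Fin N → X N q,
      (∑ i, D.lact (a i) (D.dz i) + ∑ i, D.lact (b i) (D.dzs i) = 0 ↔
        ∃ c : X N q, ∀ i, a i = (lam * qc q ^ (-(2 * exZ i))) • (c * Zs N q i)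
          ∧ b i = c * Z N q i)) ∧
  D.RelHolds lam

/-- The one-form `μ θ₊ + λ θ₋`. -/
def theta0 (D : PreCalc N q) (mu lam : ℂ) : D.Γ := mu • D.thP + lam • D.thM

/-- `c • ω` (scalar multiple of a one-form). -/
def smulG (D : PreCalc N q) (c : ℂ) (ω : D.Γ) : D.Γ := c • ω

/-- The one-form `θ₀` quasi-commutes with all generators of `X`. -/
def QuasiComm (D : PreCalc N q) (θ₀ : D.Γ) : Prop :=
  ∀ m : Fin N, ∃ c c' : ℂ,
    D.ract θ₀ (Z N q m) = c • D.lact (Z N q m) θ₀ ∧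
    D.ract θ₀ (Zs N q m) = c' • D.lact (Zs N q m) θ₀

/-- The calculus is inner with generating one-form `θ`. -/
def Inner (D : PreCalc N q) (θ : D.Γ) : Prop :=
  ∀ x : X N q, D.d x = D.ract θ x - D.lact x θ

/-- Structure equations of the calculus `Γ_{ατ}`. -/
def EqAT (D : PreCalc N q) (α τ : ℝ) : Prop :=
  ∀ k l : Fin N,
    D.ract (D.dz k) (Z N q l) =
        (qc q * (α:ℂ)) • D.SRinv k l
        + (qc q ^ 2 * (α:ℂ) - 1) • D.lzdz k l
        + (qc q ^ 2 * (α:ℂ) ^ 2 * (1 - sT N q * (τ:ℂ))) • D.zzP k l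
        + (qc q ^ 2 * (1 - (α:ℂ) * sT N q * (τ:ℂ))) • D.zzM k l
    ∧ D.ract (D.dzs k) (Zs N q l) =
        ((qc q)⁻¹ * (α:ℂ)⁻¹) • D.SRbar k l
        + (qc q ^ (-2:ℤ) * (α:ℂ)⁻¹ - 1) • D.lzsdzs k l
        + (1 - sT N q * (τ:ℂ)) • D.zszsP k l
        + ((α:ℂ)⁻¹ ^ 2 * (1 - (α:ℂ) * sT N q * (τ:ℂ))) • D.zszsM k l
    ∧ D.ract (D.dz k) (Zs N q l) =
        ((qc q)⁻¹ * (α:ℂ)⁻¹) • D.SRlinv k l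
        + (qc q ^ 2 * (α:ℂ) - 1) • D.lzdzs k l
        - (qc q ^ 2 * (α:ℂ) * (1 - sP N q * (τ:ℂ))) • D.zzsP k l
        - ((α:ℂ) * (τ:ℂ) * qc q ^ (2 * exZ k) * kdelta k l) • D.thP
        - ((α:ℂ)⁻¹ * (1 - qc q ^ 2 * (α:ℂ) * sP N q * (τ:ℂ))) • D.zzsM k l
        - ((τ:ℂ) * qc q ^ (2 * exZ k) * kdelta k l) • D.thM
    ∧ D.ract (D.dzs k) (Z N q l) =
        (qc q * (α:ℂ)) • D.SRright k l
        + (qc q ^ (-2:ℤ) * (α:ℂ)⁻¹ - 1) • D.lzsdz k l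
        - (qc q ^ 2 * (α:ℂ) * (1 - sP N q * (τ:ℂ))) • D.zszP k l
        - ((α:ℂ) * (τ:ℂ) * kdelta k l) • D.thP
        - ((α:ℂ)⁻¹ * (1 - qc q ^ 2 * (α:ℂ) * sP N q * (τ:ℂ))) • D.zszM k l
        - ((τ:ℂ) * kdelta k l) • D.thM

/-- Structure equations of the calculus `Γ'_{αω}`. -/
def EqAP (D : PreCalc N q) (α ω : ℝ) : Prop :=
  ∀ k l : Fin N,
    D.ract (D.dz k) (Z N q l) =
        (qc q * (α:ℂ)) • D.SRinv k l
        + (qc q ^ 2 * (α:ℂ) - 1) • D.lzdz k l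
        + (ω:ℂ) • D.zzP k l
        + ((α:ℂ)⁻¹ * (ω:ℂ) - qc q ^ 2 * ((α:ℂ) - 1)) • D.zzM k l
    ∧ D.ract (D.dzs k) (Zs N q l) =
        ((qc q)⁻¹ * (α:ℂ)⁻¹) • D.SRbar k l
        + (qc q ^ (-2:ℤ) * (α:ℂ)⁻¹ - 1) • D.lzsdzs k l
        + (qc q ^ 2 * (α:ℂ) * (ω:ℂ)⁻¹ - ((α:ℂ)⁻¹ - 1)) • D.zszsP k l
        + (qc q ^ 2 * (ω:ℂ)⁻¹) • D.zszsM k l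
    ∧ D.ract (D.dz k) (Zs N q l) =
        ((qc q)⁻¹ * (α:ℂ)⁻¹) • D.SRlinv k l
        + (qc q ^ 2 * (α:ℂ) - 1) • D.lzdzs k l
        - (qc q ^ 2 * (α:ℂ)) • D.zzsP k l
        - (α:ℂ)⁻¹ • D.zzsM k l
    ∧ D.ract (D.dzs k) (Z N q l) =
        (qc q * (α:ℂ)) • D.SRright k l
        + (qc q ^ (-2:ℤ) * (α:ℂ)⁻¹ - 1) • D.lzsdz k l
        - (qc q ^ 2 * (α:ℂ)) • D.zszP k l
        - (α:ℂ)⁻¹ • D.zszM k l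

/-- Structure equations of the calculus `Γ''_{ωψ}`. -/
def EqPP (D : PreCalc N q) (ω ψ : ℝ) : Prop :=
  ∀ k l : Fin N,
    D.ract (D.dz k) (Z N q l) =
        (qc q)⁻¹ • D.SRinv k l
        + (ω:ℂ) • D.zzP k l
        + (qc q ^ 2 * (ω:ℂ) * (ψ:ℂ) - 1) • D.zzM k l
    ∧ D.ract (D.dzs k) (Zs N q l) =
        qc q • D.SRbar k l
        + ((ψ:ℂ) - qc q ^ 2) • D.zszsP k l
        + (qc q ^ 2 * (ω:ℂ)⁻¹) • D.zszsM k l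
    ∧ D.ract (D.dz k) (Zs N q l) =
        qc q • D.SRlinv k l
        - D.zzsP k l
        - (qc q ^ 2:ℂ) • D.zzsM k l
    ∧ D.ract (D.dzs k) (Z N q l) =
        (qc q)⁻¹ • D.SRright k l
        - D.zszP k l
        - (qc q ^ 2:ℂ) • D.zszM k l

/-- Structure equations of the calculus `Γ'''_{ρτ}`. -/
def EqPPP (D : PreCalc N q) (ρ τ : ℝ) : Prop :=
  ∀ k l : Fin N,
    D.ract (D.dz k) (Z N q l) =
        (qc q)⁻¹ • D.SRinv k l
        - (qc q ^ (-2:ℤ) * ((ρ:ℂ) / (τ:ℂ)) * (sT N q * (ρ:ℂ) - 1)) • D.zzP k l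
        - (((ρ:ℂ) / (τ:ℂ)) * (sT N q * (τ:ℂ) - qc q ^ 2)) • D.zzM k l
    ∧ D.ract (D.dzs k) (Zs N q l) =
        qc q • D.SRbar k l
        - (((τ:ℂ) / (ρ:ℂ)) * (sT N q * (ρ:ℂ) - 1)) • D.zszsP k l
        - (qc q ^ 2 * ((τ:ℂ) / (ρ:ℂ)) * (sT N q * (τ:ℂ) - qc q ^ 2)) • D.zszsM k l
    ∧ D.ract (D.dz k) (Zs N q l) =
        qc q • D.SRlinv k l
        - (qc q ^ (-2:ℤ) * (ρ:ℂ) * qc q ^ (2 * exZ k) * kdelta k l) • D.thP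
        - ((τ:ℂ) * qc q ^ (2 * exZ k) * kdelta k l) • D.thM
        + (sP N q * (ρ:ℂ) - 1) • D.zzsP k l
        + (qc q ^ 2 * (sP N q * (τ:ℂ) - 1)) • D.zzsM k l
    ∧ D.ract (D.dzs k) (Z N q l) =
        (qc q)⁻¹ • D.SRright k l
        - (qc q ^ (2 * (N:ℤ) - 2) * (ρ:ℂ) * kdelta k l) • D.thP
        - (qc q ^ (2 * (N:ℤ)) * (τ:ℂ) * kdelta k l) • D.thM
        + (sP N q * (ρ:ℂ) - 1) • D.zszP k l
        + (qc q ^ 2 * (sP N q * (τ:ℂ) - 1)) • D.zszM k l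

/-- Structure equations of the calculus `Γ̃_λ`. -/
def EqTl (D : PreCalc N q) (lam : ℂ) : Prop :=
  ∀ k l : Fin N,
    D.ract (D.dz k) (Z N q l) =
        (qc q * lam⁻¹) • D.SRinv k l
        + (qc q ^ 2 * lam⁻¹ - 1) • D.lzdz k l
        + (qc q ^ 2 * lam⁻¹ * (lam⁻¹ - 1)) • D.zzP k l
    ∧ D.ract (D.dzs k) (Zs N q l) =
        ((qc q)⁻¹ * lam) • D.SRbar k l
        + (qc q ^ (-2:ℤ) * lam - 1) • D.lzsdzs k l
        - (lam - 1) • D.zszsP k l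
    ∧ D.ract (D.dz k) (Zs N q l) =
        ((qc q)⁻¹ * lam) • D.SRlinv k l
        + (qc q ^ 2 * lam⁻¹ - 1) • D.lzdzs k l
        - (qc q ^ 2 * lam⁻¹ - 1) • D.zzsP k l
    ∧ D.ract (D.dzs k) (Z N q l) =
        (qc q * lam⁻¹) • D.SRright k l
        + (qc q ^ (-2:ℤ) * lam - 1) • D.lzsdz k l
        - (qc q ^ 2 * lam⁻¹ - 1) • D.zszP k l

/-- Structure equations of the calculus `Γ̃'_λ`. -/
def EqTp (D : PreCalc N q) (lam : ℂ) : Prop :=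
  ∀ k l : Fin N,
    D.ract (D.dz k) (Z N q l) =
        (qc q)⁻¹ • D.SRinv k l
        - (lam⁻¹ * (qc q ^ 4 * lam⁻¹ - 1)) • D.zzP k l
    ∧ D.ract (D.dzs k) (Zs N q l) =
        qc q • D.SRbar k l
        - (qc q ^ (-2:ℤ) * lam * (qc q ^ 4 * lam⁻¹ - 1)) • D.zszsP k l
    ∧ D.ract (D.dz k) (Zs N q l) =
        qc q • D.SRlinv k l
        + (qc q ^ 2 * lam⁻¹ - 1) • D.zzsP k l
    ∧ D.ract (D.dzs k) (Z N q l) =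
        (qc q)⁻¹ • D.SRright k l
        + (qc q ^ 2 * lam⁻¹ - 1) • D.zszP k l

/-- Structure equations of the calculus `Γ̃''_λ` (for `λ ∉ {0,∞}`). -/
def EqTpp (D : PreCalc N q) (lam : ℂ) : Prop :=
  ∀ k l : Fin N,
    D.ract (D.dz k) (Z N q l) = (qc q)⁻¹ • D.SRinv k l
    ∧ D.ract (D.dzs k) (Zs N q l) = qc q • D.SRbar k l
    ∧ D.ract (D.dz k) (Zs N q l) =
        qc q • D.SRlinv k l
        + (qc q ^ (-2:ℤ) * (sT N q)⁻¹ * (qc q ^ 4 * lam⁻¹ - 1)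
            * qc q ^ (2 * exZ k) * kdelta k l) • D.thP
        - ((sT N q)⁻¹ * (qc q ^ (2 * (N:ℤ) + 2) * lam⁻¹ - 1)) • D.zzsP k l
    ∧ D.ract (D.dzs k) (Z N q l) =
        (qc q)⁻¹ • D.SRright k l
        + (qc q ^ (-2:ℤ) * (sT N q)⁻¹ * (qc q ^ 4 * lam⁻¹ - 1) * kdelta k l) • D.thP
        - ((sT N q)⁻¹ * (qc q ^ (2 * (N:ℤ) + 2) * lam⁻¹ - 1)) • D.zszP k l

/-- Structure equations of the calculus `Γ̃°_λ`. -/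
def EqTo (D : PreCalc N q) (lam : ℂ) : Prop :=
  ∀ k l : Fin N,
    D.ract (D.dz k) (Z N q l) =
        (qc q * lam⁻¹) • D.SRinv k l
        + (qc q ^ 2 * lam⁻¹ - 1) • D.lzdz k l
        + (qc q ^ 2 * lam⁻¹ * (lam⁻¹ - 1)) • D.zzP k l
    ∧ D.ract (D.dzs k) (Zs N q l) =
        qc q • D.SRbar k l
        - (qc q ^ (-2:ℤ) * lam * (qc q ^ 4 * lam⁻¹ - 1)) • D.zszsP k l
    ∧ D.ract (D.dz k) (Zs N q l) = ((qc q)⁻¹ * lam) • D.SRlinv k l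
    ∧ D.ract (D.dzs k) (Z N q l) =
        (qc q)⁻¹ • D.SRright k l
        + (qc q ^ (-2:ℤ) * lam - 1) • D.lzsdz k l

/-- Structure equations of the calculus `Γ̃°°_λ`. -/
def EqToo (D : PreCalc N q) (lam : ℂ) : Prop :=
  ∀ k l : Fin N,
    D.ract (D.dz k) (Z N q l) =
        (qc q)⁻¹ • D.SRinv k l
        - (lam⁻¹ * (qc q ^ 4 * lam⁻¹ - 1)) • D.zzP k l
    ∧ D.ract (D.dzs k) (Zs N q l) =
        ((qc q)⁻¹ * lam) • D.SRbar k l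
        + (qc q ^ (-2:ℤ) * lam - 1) • D.lzsdzs k l
        - (lam - 1) • D.zszsP k l
    ∧ D.ract (D.dz k) (Zs N q l) =
        qc q • D.SRlinv k l
        + (qc q ^ 2 * lam⁻¹ - 1) • D.lzdzs k l
    ∧ D.ract (D.dzs k) (Z N q l) = (qc q * lam⁻¹) • D.SRright k l

end PreCalc

end QSphere

/-! Write `θ₊ = Σ_k z_k·dz*_k` and `θ₋ = Σ_k q^{-2k} z*_k·dz_k`. To move a generator `w` through
`θ_±` one moves it through every `dz_k`, `dz*_k` by the structure equations. The R-matrix terms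
contract, by the commutation relations of `X`, to `q^{±1} w·θ_±`; the delta terms pick out a
single summand; and the terms `z_k w·θ` (resp. `z*_k w·θ`) collapse through the sphere relations
`Σ_k z_k z*_k = 1` and `Σ_k q^{-2k} z*_k z_k = q^{-2}`. Hence `θ_±·w` is a combination of `w·θ₊`
and `w·θ₋`, and for `θ₀ = θ₊ + q²(τ/ρ)θ₋` the two combinations add up to `q^{-2} z_m·θ₀` for
`w = z_m` and to `q² z*_m·θ₀` for `w = z*_m`, thanks to `q² s = s̃ + q^{2N}`. -/

namespace QSphere

section Sphere

variable {N : ℕ} {q : ℝ}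

lemma qc_ne_zero (hq : q ≠ 0) : qc q ≠ 0 :=
  Complex.ofReal_ne_zero.mpr hq

lemma inv_qc_mul_Qc (hq : qc q ≠ 0) : (qc q)⁻¹ * Qc q = 1 - qc q ^ (-2 : ℤ) := by
  rw [Qc, zpow_neg, zpow_two]
  field_simp

lemma Z_mul_Z_of_lt {i j : Fin N} (h : i < j) :
    Z N q i * Z N q j = qc q • (Z N q j * Z N q i) := by
  simpa [Z] using RingQuot.mkAlgHom_rel ℂ (SphereRel.zz (N := N) (q := q) h)

lemma Zs_mul_Zs_of_lt {i j : Fin N} (h : i < j) :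
    Zs N q i * Zs N q j = (qc q)⁻¹ • (Zs N q j * Zs N q i) := by
  simpa [Zs] using RingQuot.mkAlgHom_rel ℂ (SphereRel.ss (N := N) (q := q) h)

lemma Z_mul_Zs_of_ne {i j : Fin N} (h : i ≠ j) :
    Z N q i * Zs N q j = qc q • (Zs N q j * Z N q i) := by
  simpa [Z, Zs] using RingQuot.mkAlgHom_rel ℂ (SphereRel.zs (N := N) (q := q) h)

lemma Z_mul_Zs_self (i : Fin N) :
    Z N q i * Zs N q i = Zs N q i * Z N q i
      - ((qc q)⁻¹ * Qc q) • ∑ k with i < k, Z N q k * Zs N q k := by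
  have h := RingQuot.mkAlgHom_rel ℂ (SphereRel.qcomm (N := N) (q := q) i)
  simp only [map_add, map_sub, map_smul, map_mul, map_sum, map_zero] at h
  rw [eq_sub_iff_add_eq, ← sub_eq_zero, ← h]
  simp only [Z, Zs]
  abel

lemma sum_Z_mul_Zs : ∑ i, Z N q i * Zs N q i = 1 := by
  simpa [Z, Zs] using RingQuot.mkAlgHom_rel ℂ (SphereRel.sphere (N := N) (q := q))

/-- Telescoping with `Z_mul_Zs_self`, from the top index downwards. -/
lemma sum_filter_le_zpow_smul_Zs_mul_Z (hq : qc q ≠ 0) (j : ℕ) :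
    ∑ a : Fin N with j ≤ a.val, qc q ^ (-(2 * exZ a)) • (Zs N q a * Z N q a)
      = qc q ^ (-(2 * ((j : ℤ) + 1))) • ∑ a : Fin N with j ≤ a.val, Z N q a * Zs N q a := by
  induction hn : N - j generalizing j with
  | zero =>
    have : ∀ a : Fin N, ¬ j ≤ (a : ℕ) := fun a => by omega
    simp [Finset.filter_false_of_mem, this]
  | succ n ih =>
    have hj : j < N := by omega
    have hsplit : (Finset.univ.filter fun a : Fin N => j ≤ (a : ℕ))
        = insert ⟨j, hj⟩ (Finset.univ.filter fun a : Fin N => ⟨j, hj⟩ < a) := by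
      ext a
      simp only [Finset.mem_filter, Finset.mem_univ, true_and, Finset.mem_insert, Fin.ext_iff,
        Fin.lt_def]
      omega
    have htail : (Finset.univ.filter fun a : Fin N => ⟨j, hj⟩ < a)
        = Finset.univ.filter fun a : Fin N => j + 1 ≤ (a : ℕ) := by
      ext a
      simp only [Finset.mem_filter, Finset.mem_univ, true_and, Fin.lt_def]
      omega
    have hnot : (⟨j, hj⟩ : Fin N) ∉ Finset.univ.filter fun a : Fin N => ⟨j, hj⟩ < a := by simp
    rw [hsplit, Finset.sum_insert hnot, Finset.sum_insert hnot, Z_mul_Zs_self, htail,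
      ih (j + 1) (by omega), inv_qc_mul_Qc hq]
    have hw : qc q ^ (-(2 * (((j + 1 : ℕ) : ℤ) + 1)))
        = qc q ^ (-(2 * ((j : ℤ) + 1))) * qc q ^ (-2 : ℤ) := by
      rw [← zpow_add₀ hq]
      push_cast
      ring_nf
    simp only [exZ, hw]
    module

lemma sum_zpow_smul_Zs_mul_Z (hq : qc q ≠ 0) :
    ∑ a, qc q ^ (-(2 * exZ a)) • (Zs N q a * Z N q a) = qc q ^ (-2 : ℤ) • (1 : X N q) := by
  simpa [sum_Z_mul_Zs] using sum_filter_le_zpow_smul_Zs_mul_Z (N := N) hq 0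

lemma sum_filter_lt_zpow_smul_Zs_mul_Z (hq : qc q ≠ 0) (m : Fin N) :
    ∑ a with m < a, qc q ^ (-(2 * exZ a)) • (Zs N q a * Z N q a)
      = qc q ^ (-(2 * exZ m) - 2) • ∑ a with m < a, Z N q a * Zs N q a := by
  have hm : (Finset.univ.filter fun a : Fin N => m < a)
      = Finset.univ.filter fun a : Fin N => (m : ℕ) + 1 ≤ (a : ℕ) := by
    ext a
    simp only [Finset.mem_filter, Finset.mem_univ, true_and, Fin.lt_def]
    omega
  rw [hm, sum_filter_le_zpow_smul_Zs_mul_Z hq]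
  push_cast
  simp only [exZ]
  ring_nf

end Sphere

lemma sum_mul_kdelta_smul {M : Type*} [AddCommMonoid M] [Module ℂ M] {N : ℕ} (c : Fin N → ℂ)
    (f : Fin N → M) (m : Fin N) :
    ∑ k, (c k * kdelta k m) • f k = c m • f m := by
  simp [kdelta]

section RMatrix

variable {N : ℕ} {q : ℝ} {M : Type*} [AddCommGroup M] [Module ℂ M]

lemma Rm_eq (i j k l : Fin N) : Rm q i j k l =
    (if i = l ∧ j = k then (if i = j then qc q else 1) else 0)
      + if i = k ∧ j = l ∧ i < j then Qc q else 0 := by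
  unfold Rm
  by_cases h1 : i = l <;> by_cases h2 : j = k <;> by_cases h3 : i = j <;> simp_all

lemma Rinv_eq (i j k l : Fin N) : Rinv q i j k l =
    (if i = l ∧ j = k then (if i = j then (qc q)⁻¹ else 1) else 0)
      - if i = k ∧ j = l ∧ j < i then Qc q else 0 := by
  unfold Rinv
  by_cases h1 : i = l <;> by_cases h2 : j = k <;> by_cases h3 : i = j <;> simp_all [apply_ite]

lemma sum_sum_Rm_smul (f : Fin N → Fin N → M) (m b : Fin N) :
    ∑ k, ∑ a, Rm q k a m b • f k a
      = (if b = m then qc q else 1) • f b m + if m < b then Qc q • f m b else 0 := by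
  simp [Rm_eq, add_smul, Finset.sum_add_distrib, ite_and, ite_smul]

lemma sum_sum_Rm_smul_diag (f : Fin N → Fin N → M) (m b : Fin N) :
    ∑ k, ∑ a, Rm q m k b a • f k a
      = (if b = m then qc q else 1) • f b m
        + if b = m then Qc q • ∑ k with m < k, f k k else 0 := by
  simp [Rm_eq, add_smul, Finset.sum_add_distrib, ite_and, ite_smul, Finset.sum_filter,
    Finset.smul_sum, eq_comm (a := m)]

lemma sum_sum_Rinv_smul (f : Fin N → Fin N → M) (m b : Fin N) :
    ∑ k, ∑ a, Rinv q b m a k • f k a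
      = (if b = m then (qc q)⁻¹ else 1) • f b m - if m < b then Qc q • f m b else 0 := by
  simp [Rinv_eq, sub_smul, Finset.sum_sub_distrib, ite_and, ite_smul, eq_comm (a := m)]

lemma sum_sum_Rinv_smul_diag (f : Fin N → Fin N → M) (m b : Fin N) :
    ∑ k, ∑ a, Rinv q a b k m • f k a
      = (if b = m then (qc q)⁻¹ else 1) • f b m
        - if b = m then Qc q • ∑ k with m < k, f k k else 0 := by
  simp [Rinv_eq, sub_smul, Finset.sum_sub_distrib, ite_and, ite_smul, Finset.sum_filter,
    Finset.smul_sum, eq_comm (a := m)]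
  split_ifs <;> simp_all

end RMatrix

section Contractions

variable {N : ℕ} {q : ℝ}

lemma sum_sum_Rright_smul_Z_mul_Z (hq : qc q ≠ 0) (m b : Fin N) :
    ∑ k, ∑ a, Rright q a b k m • (Z N q k * Z N q a) = qc q • (Z N q m * Z N q b) := by
  simp only [Rright]
  refine (sum_sum_Rm_smul (fun k a => Z N q k * Z N q a) m b).trans ?_
  rcases lt_trichotomy m b with h | rfl | h
  · simp only [h.ne', h, if_false, if_true, one_smul, Z_mul_Z_of_lt h]
    match_scalars
    rw [Qc]
    field_simp
    ring
  · simp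
  · simp [h.ne, not_lt.2 h.le, Z_mul_Z_of_lt h]

lemma sum_sum_Rbar_smul_Z_mul_Zs (hq : qc q ≠ 0) (m b : Fin N) :
    ∑ k, ∑ a, Rbar q a b k m • (Z N q k * Zs N q a) = qc q • (Zs N q m * Z N q b) := by
  simp only [Rbar]
  refine (sum_sum_Rm_smul_diag (fun k a => Z N q k * Zs N q a) m b).trans ?_
  by_cases h : b = m
  · subst h
    simp only [if_true]
    rw [Z_mul_Zs_self]
    match_scalars
    · field_simp
    · field_simp
      ring
  · simp [h, Z_mul_Zs_of_ne h]

lemma sum_sum_Rinv_smul_Zs_mul_Z (hq : qc q ≠ 0) (m b : Fin N) :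
    ∑ k, ∑ a, Rinv q a b k m • ((qc q ^ (-(2 * exZ k)) • Zs N q k) * Z N q a)
      = ((qc q)⁻¹ * qc q ^ (-(2 * exZ b))) • (Z N q m * Zs N q b) := by
  refine (sum_sum_Rinv_smul_diag
    (fun k a => (qc q ^ (-(2 * exZ k)) • Zs N q k) * Z N q a) m b).trans ?_
  by_cases h : b = m
  · subst h
    simp only [if_true, smul_mul_assoc, sum_filter_lt_zpow_smul_Zs_mul_Z hq]
    rw [Z_mul_Zs_self, inv_qc_mul_Qc hq, zpow_sub₀ hq]
    match_scalars
    · ring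
    · rw [Qc, zpow_neg, zpow_two]
      field_simp
  · simp only [h, if_false, one_smul, sub_zero, smul_mul_assoc, Z_mul_Zs_of_ne (Ne.symm h)]
    match_scalars
    field_simp

lemma sum_sum_Rlinv_smul_Zs_mul_Zs (hq : qc q ≠ 0) (m b : Fin N) :
    ∑ k, ∑ a, Rlinv q a b k m • ((qc q ^ (-(2 * exZ k)) • Zs N q k) * Zs N q a)
      = ((qc q)⁻¹ * qc q ^ (-(2 * exZ b))) • (Zs N q m * Zs N q b) := by
  have hR : ∀ k a, Rlinv q a b k m • ((qc q ^ (-(2 * exZ k)) • Zs N q k) * Zs N q a)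
      = Rinv q b m a k • (qc q ^ (2 * exZ m - 2 * exZ a) * qc q ^ (-(2 * exZ k))) •
          (Zs N q k * Zs N q a) := fun k a => by
    rw [Rlinv, smul_mul_assoc, smul_smul, smul_smul]
    ring_nf
  simp only [hR]
  refine (sum_sum_Rinv_smul (fun k a => (qc q ^ (2 * exZ m - 2 * exZ a) * qc q ^ (-(2 * exZ k))) •
          (Zs N q k * Zs N q a)) m b).trans ?_
  have hw : qc q ^ (2 * exZ m - 2 * exZ b) * qc q ^ (-(2 * exZ m)) = qc q ^ (-(2 * exZ b)) := by
    rw [← zpow_add₀ hq]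
    ring_nf
  rcases lt_trichotomy m b with h | rfl | h
  · simp only [h.ne', h, if_false, if_true, one_smul, sub_self, zpow_zero, one_mul, hw,
      Zs_mul_Zs_of_lt h]
    match_scalars
    simp only [Qc]
    field_simp
    ring
  · simp only [if_true, sub_self, zpow_zero, one_mul, lt_irrefl, if_false, sub_zero, smul_smul]
  · simp only [h.ne, not_lt.2 h.le, if_false, sub_self, zpow_zero, one_mul, sub_zero,
      Zs_mul_Zs_of_lt h, smul_smul, mul_comm]

end Contractions

section Scalars

variable {N : ℕ} {q : ℝ}

lemma sP_eq_sT_add_one (hN : 0 < N) : sP N q = sT N q + 1 := by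
  rw [sP, sT, Finset.range_eq_Ico, Finset.sum_eq_sum_Ico_succ_bot hN, mul_zero, pow_zero, add_comm]

lemma qc_sq_mul_sP (hN : 0 < N) : qc q ^ 2 * sP N q = sT N q + qc q ^ (2 * (N : ℤ)) := by
  have hzpow : qc q ^ (2 * (N : ℤ)) = qc q ^ (2 * N) := by
    rw [← zpow_natCast]
    push_cast
    rfl
  rw [hzpow, sT, ← Finset.sum_Ico_succ_top hN, Finset.sum_Ico_eq_sum_range, sP, Finset.mul_sum,
    Nat.add_sub_cancel]
  exact Finset.sum_congr rfl fun i _ => by ring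

end Scalars

namespace PreCalc

variable {N : ℕ} {q : ℝ} {D : PreCalc N q}

namespace IsFODC

theorem lact_add (hD : D.IsFODC) (x : X N q) (ω η : D.Γ) :
    D.lact x (ω + η) = D.lact x ω + D.lact x η := hD.1 x ω η

theorem add_lact (hD : D.IsFODC) (x y : X N q) (ω : D.Γ) :
    D.lact (x + y) ω = D.lact x ω + D.lact y ω := hD.2.1 x y ω

theorem mul_lact (hD : D.IsFODC) (x y : X N q) (ω : D.Γ) :
    D.lact (x * y) ω = D.lact x (D.lact y ω) := hD.2.2.1 x y ω

theorem smul_lact (hD : D.IsFODC) (c : ℂ) (x : X N q) (ω : D.Γ) :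
    D.lact (c • x) ω = c • D.lact x ω := hD.2.2.2.2.1 c x ω

theorem lact_smul (hD : D.IsFODC) (c : ℂ) (x : X N q) (ω : D.Γ) :
    D.lact x (c • ω) = c • D.lact x ω := hD.2.2.2.2.2.1 c x ω

theorem ract_add (hD : D.IsFODC) (ω η : D.Γ) (x : X N q) :
    D.ract (ω + η) x = D.ract ω x + D.ract η x := hD.2.2.2.2.2.2.1 ω η x

theorem ract_smul (hD : D.IsFODC) (c : ℂ) (ω : D.Γ) (x : X N q) :
    D.ract (c • ω) x = c • D.ract ω x := hD.2.2.2.2.2.2.2.2.2.2.1 c ω x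

theorem ract_lact (hD : D.IsFODC) (x : X N q) (ω : D.Γ) (y : X N q) :
    D.ract (D.lact x ω) y = D.lact x (D.ract ω y) := hD.2.2.2.2.2.2.2.2.2.2.2.2.1 x ω y

theorem lact_sub (hD : D.IsFODC) (x : X N q) (ω η : D.Γ) :
    D.lact x (ω - η) = D.lact x ω - D.lact x η :=
  map_sub (AddMonoidHom.mk' (D.lact x) (hD.lact_add x)) ω η

theorem lact_sum (hD : D.IsFODC) (x : X N q) {ι : Type*} (s : Finset ι) (ω : ι → D.Γ) :
    D.lact x (∑ i ∈ s, ω i) = ∑ i ∈ s, D.lact x (ω i) :=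
  map_sum (AddMonoidHom.mk' (D.lact x) (hD.lact_add x)) ω s

theorem sum_lact (hD : D.IsFODC) {ι : Type*} (s : Finset ι) (x : ι → X N q) (ω : D.Γ) :
    D.lact (∑ i ∈ s, x i) ω = ∑ i ∈ s, D.lact (x i) ω :=
  map_sum (AddMonoidHom.mk' (D.lact · ω) (hD.add_lact · · ω)) x s

theorem ract_sum (hD : D.IsFODC) {ι : Type*} (s : Finset ι) (ω : ι → D.Γ) (x : X N q) :
    D.ract (∑ i ∈ s, ω i) x = ∑ i ∈ s, D.ract (ω i) x :=
  map_sum (AddMonoidHom.mk' (D.ract · x) (hD.ract_add · · x)) ω s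

theorem sum_lact_sum_sum (hD : D.IsFODC) {R : Fin N → Fin N → Fin N → ℂ} {x y v : Fin N → X N q}
    {u : X N q} {α : Fin N → ℂ} (ω : Fin N → D.Γ)
    (h : ∀ b, ∑ k, ∑ a, R k a b • (x k * y a) = α b • (u * v b)) :
    ∑ k, D.lact (x k) (∑ a, ∑ b, R k a b • D.lact (y a) (ω b))
      = D.lact u (∑ b, α b • D.lact (v b) (ω b)) := by
  calc ∑ k, D.lact (x k) (∑ a, ∑ b, R k a b • D.lact (y a) (ω b))
      = ∑ k, ∑ b, ∑ a, R k a b • D.lact (x k * y a) (ω b) := by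
        refine Finset.sum_congr rfl fun k _ => ?_
        simp only [hD.lact_sum, hD.lact_smul, hD.mul_lact]
        exact Finset.sum_comm
    _ = ∑ b, D.lact (α b • (u * v b)) (ω b) := by
        rw [Finset.sum_comm]
        simp only [← h, hD.sum_lact, hD.smul_lact]
    _ = D.lact u (∑ b, α b • D.lact (v b) (ω b)) := by
        simp only [hD.lact_sum, hD.lact_smul, hD.smul_lact, hD.mul_lact]

theorem sum_lact_lact_mul (hD : D.IsFODC) (x y : Fin N → X N q) (w : X N q) (θ : D.Γ) :
    ∑ k, D.lact (x k) (D.lact (y k * w) θ) = D.lact ((∑ k, x k * y k) * w) θ := by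
  simp only [Finset.sum_mul, hD.sum_lact, mul_assoc, hD.mul_lact]

theorem ract_thP (hD : D.IsFODC) (w : X N q) :
    D.ract D.thP w = ∑ k, D.lact (Z N q k) (D.ract (D.dzs k) w) := by
  simp only [thP, hD.ract_sum, hD.ract_lact]

theorem thM_eq_sum (hD : D.IsFODC) :
    D.thM = ∑ k, D.lact (qc q ^ (-(2 * exZ k)) • Zs N q k) (D.dz k) := by
  simp only [thM, hD.smul_lact]

theorem ract_thM (hD : D.IsFODC) (w : X N q) :
    D.ract D.thM w = ∑ k, D.lact (qc q ^ (-(2 * exZ k)) • Zs N q k) (D.ract (D.dz k) w) := by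
  simp only [hD.thM_eq_sum, hD.ract_sum, hD.ract_lact]

variable {ρ τ : ℝ}

theorem ract_thP_Z (hD : D.IsFODC) (hEq : D.EqPPP ρ τ) (hq : qc q ≠ 0) (m : Fin N) :
    D.ract D.thP (Z N q m) =
      (sP N q * ρ - qc q ^ (2 * (N : ℤ) - 2) * ρ) • D.lact (Z N q m) D.thP
      + (qc q ^ 2 * (sP N q * τ - 1) - qc q ^ (2 * (N : ℤ)) * τ) • D.lact (Z N q m) D.thM := by
  have hR : ∑ k, D.lact (Z N q k) (D.SRright k m) = qc q • D.lact (Z N q m) D.thP := by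
    rw [thP, ← hD.lact_smul, Finset.smul_sum]
    exact hD.sum_lact_sum_sum (R := fun k a b => Rright q a b k m) _
      (sum_sum_Rright_smul_Z_mul_Z hq m)
  have hθ : ∀ θ, ∑ k, D.lact (Z N q k) (D.lact (Zs N q k * Z N q m) θ) = D.lact (Z N q m) θ :=
    fun θ => by rw [hD.sum_lact_lact_mul, sum_Z_mul_Zs, one_mul]
  simp only [hD.ract_thP, (hEq _ m).2.2.2, zszP, zszM, hD.lact_add, hD.lact_sub, hD.lact_smul,
    Finset.sum_add_distrib, Finset.sum_sub_distrib, ← Finset.smul_sum, sum_mul_kdelta_smul, hR, hθ,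
    smul_smul, inv_mul_cancel₀ hq]
  module

theorem ract_thM_Z (hD : D.IsFODC) (hEq : D.EqPPP ρ τ) (hq : qc q ≠ 0) (m : Fin N) :
    D.ract D.thM (Z N q m) = qc q ^ (-2 : ℤ) •
      (-(qc q ^ (-2 : ℤ) * (ρ / τ) * (sT N q * ρ - 1)) • D.lact (Z N q m) D.thP
        + (1 - (ρ / τ) * (sT N q * τ - qc q ^ 2)) • D.lact (Z N q m) D.thM) := by
  have hR : ∑ k, D.lact (qc q ^ (-(2 * exZ k)) • Zs N q k) (D.SRinv k m)
      = (qc q)⁻¹ • D.lact (Z N q m) D.thM := by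
    refine (hD.sum_lact_sum_sum (R := fun k a b => Rinv q a b k m) _
      (sum_sum_Rinv_smul_Zs_mul_Z hq m)).trans ?_
    rw [thM, ← hD.lact_smul, Finset.smul_sum]
    simp only [smul_smul]
  have hθ : ∀ θ, ∑ k, D.lact (qc q ^ (-(2 * exZ k)) • Zs N q k) (D.lact (Z N q k * Z N q m) θ)
      = qc q ^ (-2 : ℤ) • D.lact (Z N q m) θ := fun θ => by
    rw [hD.sum_lact_lact_mul]
    simp only [smul_mul_assoc, sum_zpow_smul_Zs_mul_Z hq, one_mul, hD.smul_lact]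
  simp only [hD.ract_thM, (hEq _ m).1, zzP, zzM, hD.lact_sub, hD.lact_smul,
    Finset.sum_sub_distrib, ← Finset.smul_sum, hR, hθ, smul_smul]
  rw [zpow_neg, zpow_two]
  module

theorem ract_thP_Zs (hD : D.IsFODC) (hEq : D.EqPPP ρ τ) (hq : qc q ≠ 0) (m : Fin N) :
    D.ract D.thP (Zs N q m) =
      (qc q ^ 2 - (τ / ρ) * (sT N q * ρ - 1)) • D.lact (Zs N q m) D.thP
      - (qc q ^ 2 * (τ / ρ) * (sT N q * τ - qc q ^ 2)) • D.lact (Zs N q m) D.thM := by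
  have hR : ∑ k, D.lact (Z N q k) (D.SRbar k m) = qc q • D.lact (Zs N q m) D.thP := by
    rw [thP, ← hD.lact_smul, Finset.smul_sum]
    exact hD.sum_lact_sum_sum (R := fun k a b => Rbar q a b k m) _
      (sum_sum_Rbar_smul_Z_mul_Zs hq m)
  have hθ : ∀ θ, ∑ k, D.lact (Z N q k) (D.lact (Zs N q k * Zs N q m) θ)
      = D.lact (Zs N q m) θ :=
    fun θ => by rw [hD.sum_lact_lact_mul, sum_Z_mul_Zs, one_mul]
  simp only [hD.ract_thP, (hEq _ m).2.1, zszsP, zszsM, hD.lact_sub, hD.lact_smul,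
    Finset.sum_sub_distrib, ← Finset.smul_sum, hR, hθ, smul_smul]
  module

theorem ract_thM_Zs (hD : D.IsFODC) (hEq : D.EqPPP ρ τ) (hq : qc q ≠ 0) (m : Fin N) :
    D.ract D.thM (Zs N q m) =
      (qc q ^ (-2 : ℤ) * (sP N q * ρ - 1 - ρ)) • D.lact (Zs N q m) D.thP
      + ((sP N q - 1) * τ) • D.lact (Zs N q m) D.thM := by
  have hR : ∑ k, D.lact (qc q ^ (-(2 * exZ k)) • Zs N q k) (D.SRlinv k m)
      = (qc q)⁻¹ • D.lact (Zs N q m) D.thM := by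
    refine (hD.sum_lact_sum_sum (R := fun k a b => Rlinv q a b k m) _
      (sum_sum_Rlinv_smul_Zs_mul_Zs hq m)).trans ?_
    rw [thM, ← hD.lact_smul, Finset.smul_sum]
    simp only [smul_smul]
  have hθ : ∀ θ, ∑ k, D.lact (qc q ^ (-(2 * exZ k)) • Zs N q k) (D.lact (Z N q k * Zs N q m) θ)
      = qc q ^ (-2 : ℤ) • D.lact (Zs N q m) θ := fun θ => by
    rw [hD.sum_lact_lact_mul]
    simp only [smul_mul_assoc, sum_zpow_smul_Zs_mul_Z hq, one_mul, hD.smul_lact]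
  simp only [hD.ract_thM, (hEq _ m).2.2.1, zzsP, zzsM, hD.lact_add, hD.lact_sub, hD.lact_smul,
    Finset.sum_add_distrib, Finset.sum_sub_distrib, ← Finset.smul_sum, sum_mul_kdelta_smul, hR, hθ]
  simp only [hD.smul_lact, smul_smul, zpow_neg, zpow_two]
  match_scalars <;> field_simp <;> ring

theorem ract_theta0_Z (hD : D.IsFODC) (hEq : D.EqPPP ρ τ) (hq : qc q ≠ 0) (hρ : (ρ : ℂ) ≠ 0)
    (hτ : (τ : ℂ) ≠ 0) (m : Fin N) :
    D.ract (D.theta0 1 (qc q ^ 2 * (τ / ρ))) (Z N q m)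
      = qc q ^ (-2 : ℤ) • D.lact (Z N q m) (D.theta0 1 (qc q ^ 2 * (τ / ρ))) := by
  have hsT : sT N q = qc q ^ 2 * sP N q - qc q ^ (2 * (N : ℤ)) := by
    rw [qc_sq_mul_sP m.pos]
    ring
  simp only [theta0, one_smul, hD.ract_add, hD.ract_smul, hD.lact_add, hD.lact_smul,
    hD.ract_thP_Z hEq hq, hD.ract_thM_Z hEq hq, zpow_sub₀ hq, hsT, zpow_neg, zpow_two]
  match_scalars <;> field_simp <;> ring

theorem ract_theta0_Zs (hD : D.IsFODC) (hEq : D.EqPPP ρ τ) (hq : qc q ≠ 0) (hρ : (ρ : ℂ) ≠ 0)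
    (hτ : (τ : ℂ) ≠ 0) (m : Fin N) :
    D.ract (D.theta0 1 (qc q ^ 2 * (τ / ρ))) (Zs N q m)
      = qc q ^ 2 • D.lact (Zs N q m) (D.theta0 1 (qc q ^ 2 * (τ / ρ))) := by
  simp only [theta0, one_smul, hD.ract_add, hD.ract_smul, hD.lact_add, hD.lact_smul,
    hD.ract_thP_Zs hEq hq, hD.ract_thM_Zs hEq hq, sP_eq_sT_add_one m.pos, zpow_neg, zpow_two]
  match_scalars <;> field_simp <;> ring

end IsFODC

end PreCalc

end QSphere

open QSphere in
theorem stmt13_general (N : ℕ) (q : ℝ) (hq : q ≠ -1 ∧ q ≠ 0 ∧ q ≠ 1)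
    (ρ τ : ℝ) (hρ : ρ ≠ 0) (hτ : τ ≠ 0)
    (D : PreCalc N q) (hD : D.IsFODC) (hEq : D.EqPPP ρ τ) :
    D.QuasiComm (D.theta0 1 (qc q ^ 2 * ((τ:ℂ) / (ρ:ℂ)))) := by
  have hq' : qc q ≠ 0 := qc_ne_zero hq.2.1
  have hρ' : (ρ : ℂ) ≠ 0 := Complex.ofReal_ne_zero.mpr hρ
  have hτ' : (τ : ℂ) ≠ 0 := Complex.ofReal_ne_zero.mpr hτ
  intro m
  exact ⟨_, _, hD.ract_theta0_Z hEq hq' hρ' hτ' m, hD.ract_theta0_Zs hEq hq' hρ' hτ' m⟩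

open QSphere in
/-- in any calculus with the structure equations of `Γ'''_{ρτ}`,
the one-form `θ₀ = θ₊ + q²(τ/ρ)θ₋` quasi-commutes with the generators of `X`. -/
theorem stmt13 (N : ℕ) (hN : 2 ≤ N) (q : ℝ) (hq : q ≠ -1 ∧ q ≠ 0 ∧ q ≠ 1)
    (ρ τ : ℝ) (hρ : ρ ≠ 0) (hτ : τ ≠ 0)
    (D : PreCalc N q) (hD : D.IsFODC) (hEq : D.EqPPP ρ τ) :
    D.QuasiComm (D.theta0 1 (qc q ^ 2 * ((τ:ℂ) / (ρ:ℂ)))) :=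
  stmt13_general N q hq ρ τ hρ hτ D hD hEq
end
end

section
/- Let α be a real number with α ∉ {0, q⁻²} and let τ be a real number. Suppose (Γ, d) is a first order differential calculus on X satisfying, for all k, l ∈ {1, …, N}: dz_k·z_l = qα Σ_{a,b} (R⁻¹)^{ab}_{kl} z_a·dz_b + (q²α−1) z_k·dz_l + q²α²(1−s̃τ) z_k z_l·θ₊ + q²(1−α s̃ τ) z_k z_l·θ₋; dz*_k·z*_l = q⁻¹α⁻¹ Σ_{a,b} R̄^{ab}_{kl} z*_a·dz*_b + (q⁻²α⁻¹−1) z*_k·dz*_l + (1−s̃τ) z*_k z*_l·θ₊ + α⁻²(1−α s̃ τ) z*_k z*_l·θ₋; dz_k·z*_l = q⁻¹α⁻¹ Σ_{a,b} (R←⁻¹)^{ab}_{kl} z*_a·dz_b + (q²α−1) z_k·dz*_l − q²α(1−sτ) z_k z*_l·θ₊ − ατ q^{2k} δ_{kl} θ₊ − α⁻¹(1−q²α sτ) z_k z*_l·θ₋ − τ q^{2k} δ_{kl} θ₋; dz*_k·z_l = qα Σ_{a,b} (R→)^{ab}_{kl} z_a·dz*_b + (q⁻²α⁻¹−1) z*_k·dz_l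 − q²α(1−sτ) z*_k z_l·θ₊ − ατ δ_{kl} θ₊ − α⁻¹(1−q²α sτ) z*_k z_l·θ₋ − τ δ_{kl} θ₋. Suppose moreover that θ₊ + α⁻¹ θ₋ = 0 in Γ. Then, with λ := α⁻¹, the structure equations of the factorised calculus hold for all k, l ∈ {1, …, N}: dz_k·z_l = qλ⁻¹ Σ_{a,b} (R⁻¹)^{ab}_{kl} z_a·dz_b + (q²λ⁻¹−1) z_k·dz_l + q²λ⁻¹(λ⁻¹−1) z_k z_l·θ₊; dz*_k·z*_l = q⁻¹λ Σ_{a,b} R̄^{ab}_{kl} z*_a·dz*_b + (q⁻²λ−1) z*_k·dz*_l − (λ−1) z*_k z*_l·θ₊; dz_k·z*_l = q⁻¹λ Σ_{a,b} (R←⁻¹)^{ab}_{kl} z*_a·dz_b + (q²λ⁻¹−1) z_k·dz*_l − (q²λ⁻¹−1) z_k z*_l·θ₊; dz*_k·z_l = qλ⁻¹ Σ_{a,b} (R→)^{ab}_{kl} z_a·dz*_b + (q⁻²λ−1) z*_k·dz_l − (q²λ⁻¹−1) z*_k z_l·θ₊. -/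
noncomputable section

open scoped BigOperators

namespace QSphere.PreCalc

variable {N : ℕ} {q : ℝ} {D : PreCalc N q}

theorem IsFODC.lact_smul_s15 (hD : D.IsFODC) (x : X N q) (c : ℂ) (ω : D.Γ) :
    D.lact x (c • ω) = c • D.lact x ω :=
  hD.2.2.2.2.2.1 c x ω

theorem thM_eq_of_relHolds {lam : ℂ} (hlam : lam ≠ 0) (h : D.RelHolds lam) :
    D.thM = (-lam⁻¹) • D.thP := by
  calc D.thM = lam⁻¹ • (lam • D.thM) := by rw [smul_smul, inv_mul_cancel₀ hlam, one_smul]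
    _ = (-lam⁻¹) • D.thP := by rw [eq_neg_of_add_eq_zero_right h, smul_neg, neg_smul]

/-- Once `θ₋ = -α θ₊`, the `τ`-dependent coefficients of `θ₊` and `θ₋` cancel in each
structure equation of `Γ_{ατ}`. -/
theorem eqTl_of_eqAT {α τ : ℝ} (hD : D.IsFODC) (hα : (α : ℂ) ≠ 0) (hEq : D.EqAT α τ)
    (hM : D.thM = (-(α : ℂ)) • D.thP) : D.EqTl (α : ℂ)⁻¹ := by
  have hlM (x : X N q) : D.lact x D.thM = (-(α : ℂ)) • D.lact x D.thP := by
    rw [hM, hD.lact_smul_s15]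
  intro k l
  obtain ⟨h₁, h₂, h₃, h₄⟩ := hEq k l
  refine ⟨?_, ?_, ?_, ?_⟩
  · rw [h₁, zzM, hlM, ← zzP]
    match_scalars <;> field_simp <;> ring
  · rw [h₂, zszsM, hlM, ← zszsP]
    match_scalars <;> field_simp <;> ring
  · rw [h₃, zzsM, hlM, ← zzsP, hM]
    match_scalars <;> field_simp <;> ring
  · rw [h₄, zszM, hlM, ← zszP, hM]
    match_scalars <;> field_simp <;> ring

end QSphere.PreCalc

open QSphere in
theorem stmt15_general (N : ℕ) (q : ℝ)
    (α : ℝ) (hα : α ≠ 0 ∧ α ≠ q ^ (-2:ℤ)) (τ : ℝ)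
    (D : PreCalc N q) (hD : D.IsFODC) (hEq : D.EqAT α τ)
    (hRel : D.RelHolds (α:ℂ)⁻¹) :
    D.EqTl (α:ℂ)⁻¹ := by
  have hα₀ : (α : ℂ) ≠ 0 := by exact_mod_cast hα.1
  have hM := PreCalc.thM_eq_of_relHolds (inv_ne_zero hα₀) hRel
  rw [inv_inv] at hM
  exact PreCalc.eqTl_of_eqAT hD hα₀ hEq hM

open QSphere in
/-- factorising `Γ_{ατ}` by the relation `θ₊ + α⁻¹θ₋ = 0`
yields the structure equations of `Γ̃_λ` with `λ = α⁻¹`. -/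
theorem stmt15 (N : ℕ) (hN : 2 ≤ N) (q : ℝ) (hq : q ≠ -1 ∧ q ≠ 0 ∧ q ≠ 1)
    (α : ℝ) (hα : α ≠ 0 ∧ α ≠ q ^ (-2:ℤ)) (τ : ℝ)
    (D : PreCalc N q) (hD : D.IsFODC) (hEq : D.EqAT α τ)
    (hRel : D.RelHolds (α:ℂ)⁻¹) :
    D.EqTl (α:ℂ)⁻¹ :=
  stmt15_general N q α hα τ D hD hEq hRel
end
end
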